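/- arXiv:2106.11734 — 2 statements merged into one kernel-verified Lean document; each statement's English description precedes it below -/
import Mathlib

section
/- There is a constant C > 0 with the following property: if a locally integrable function f on the open unit disc satisfies the BWMO condition, then for every z ∈ 𝔻 and all points z̃, ζ ∈ B(z) with z̃ ≾ ζ (so that B(z̃,ζ) ⊆ B(z)), one has (1/|B(z)|)·|∫_{B(z̃,ζ)} (f(ξ) − f̂(z)) dA(ξ)| ≤ C·‖f‖_BWMO. -/
open MeasureTheory Set

noncomputable section

/-- The normalized area measure on the plane: planar Lebesgue measure divided by `π`. -/
def dA : Measure ℂ := (ENNReal.ofReal Real.pi)⁻¹ • volume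

/-- The open unit disc `𝔻`. -/
def unitDisc : Set ℂ := {z : ℂ | ‖z‖ < 1}

/-- The argument `θ` of `z`, normalized to lie in `[0, 2π)`. -/
def theta (z : ℂ) : ℝ := toIcoMod Real.two_pi_pos 0 (Complex.arg z)

/-- The angle of `ζ`, normalized to lie in `[theta z, theta z + 2π)`;
for `ζ ∈ B(z)` this is the angle `θ̃ ∈ [θ, θ + π(1-r)]` of the paper's convention. -/
def angFrom (z ζ : ℂ) : ℝ := toIcoMod Real.two_pi_pos (theta z) (Complex.arg ζ)

/-- The polar rectangle `{ρ e^{iφ} : r₁ ≤ ρ ≤ r₂, φ₁ ≤ φ ≤ φ₂}`. -/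
def polarRect (r₁ r₂ φ₁ φ₂ : ℝ) : Set ℂ :=
  {w : ℂ | ∃ ρ φ : ℝ, r₁ ≤ ρ ∧ ρ ≤ r₂ ∧ φ₁ ≤ φ ∧ φ ≤ φ₂ ∧
    w = (ρ : ℂ) * Complex.exp ((φ : ℂ) * Complex.I)}

/-- The set `B(z)` for `z = r e^{iθ} ∈ 𝔻`. -/
def Bz (z : ℂ) : Set ℂ :=
  polarRect ‖z‖ (1 - (1 - ‖z‖) / 2) (theta z) (theta z + Real.pi * (1 - ‖z‖))

/-- The set `B(z, ζ)` for `ζ ∈ B(z)`. -/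
def Bzz (z ζ : ℂ) : Set ℂ := polarRect ‖z‖ ‖ζ‖ (theta z) (angFrom z ζ)

/-- The set `B(ζ₁, ζ₂)` for points `ζ₁ ≾ ζ₂` of `B(z)`. -/
def Bsub (z ζ₁ ζ₂ : ℂ) : Set ℂ := polarRect ‖ζ₁‖ ‖ζ₂‖ (angFrom z ζ₁) (angFrom z ζ₂)

/-- The relation `ζ₁ ≾ ζ₂` for points of `B(z)`: `ρ₁ ≤ ρ₂` and `φ₁ ≤ φ₂`. -/
def precSim (z ζ₁ ζ₂ : ℂ) : Prop := ‖ζ₁‖ ≤ ‖ζ₂‖ ∧ angFrom z ζ₁ ≤ angFrom z ζ₂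

/-- The average `f̂_K = (1/|K|) ∫_K f dA` of `f` over a set `K`. -/
def avgOn (f : ℂ → ℂ) (K : Set ℂ) : ℂ := ((dA K).toReal)⁻¹ • ∫ w in K, f w ∂dA

/-- The average function `f̂(z) = f̂_{B(z)}`. -/
def avg (f : ℂ → ℂ) (z : ℂ) : ℂ := avgOn f (Bz z)

/-- The quantity `(1/|B(z)|) |∫_{B(z,ζ)} (f(ξ) - f̂(z)) dA(ξ)|`. -/
def wQuot (f : ℂ → ℂ) (z ζ : ℂ) : ℝ :=
  ((dA (Bz z)).toReal)⁻¹ * ‖∫ ξ in Bzz z ζ, (f ξ - avg f z) ∂dA‖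

/-- The BWMO condition: `‖f‖_BWMO < ∞`. -/
def IsBWMO (f : ℂ → ℂ) : Prop := ∃ C : ℝ, ∀ z ∈ unitDisc, ∀ ζ ∈ Bz z, wQuot f z ζ ≤ C

/-- The BWMO seminorm `‖f‖_BWMO`. -/
def bwmoNorm (f : ℂ → ℂ) : ℝ :=
  sSup {c : ℝ | ∃ z ∈ unitDisc, ∃ ζ ∈ Bz z, c = wQuot f z ζ}

/-- The VWMO condition:
`(1/|B(z)|) sup_{ζ ∈ B(z)} |∫_{B(z,ζ)} (f - f̂(z)) dA| → 0` as `|z| → 1`. -/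
def IsVWMO (f : ℂ → ℂ) : Prop :=
  ∀ ε > (0:ℝ), ∃ r₀ < (1:ℝ), ∀ z ∈ unitDisc, r₀ ≤ ‖z‖ → ∀ ζ ∈ Bz z, wQuot f z ζ ≤ ε

/-- The Bergman-metric disc `D(z,1)` of radius `1` centered at `z`. -/
def Dball (z : ℂ) : Set ℂ :=
  {w : ℂ | ‖w‖ < 1 ∧ ‖(z - w) / (1 - (starRingEnd ℂ) w * z)‖ < Real.tanh 1}

/-- The hyperbolic average `f̂₁(z) = (1/|D(z,1)|) ∫_{D(z,1)} f dA` of a real-valued `f`. -/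
def avg1 (f : ℂ → ℝ) (z : ℂ) : ℝ := ((dA (Dball z)).toReal)⁻¹ * ∫ w in Dball z, f w ∂dA

/-- The mean oscillation `(1/|D(z,1)|) ∫_{D(z,1)} |f - f̂₁(z)| dA` of a real-valued `f`. -/
def meanOsc1 (f : ℂ → ℝ) (z : ℂ) : ℝ :=
  ((dA (Dball z)).toReal)⁻¹ * ∫ ξ in Dball z, |f ξ - avg1 f z| ∂dA

/-- The Berezin transform `f̃(z) = ∫_𝔻 f(w) |k_z(w)|² dA(w)`,
where `k_z(w) = (1-|z|²)/(1-w z̄)²`. -/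
def berezin (f : ℂ → ℂ) (z : ℂ) : ℂ :=
  ∫ w in unitDisc, f w * ((((1 - ‖z‖ ^ 2) ^ 2 / ‖1 - w * (starRingEnd ℂ) z‖ ^ 4 : ℝ)) : ℂ) ∂dA

/-- The example symbol of Section 4:
`f(r e^{iθ}) = (1/(r (1-r)^{b-β})) sin(1/(1-r)^b)` for `r ≥ 1/2`, and `1` for `r < 1/2`. -/
def fEx (b β : ℝ) (z : ℂ) : ℝ :=
  if ‖z‖ < 1 / 2 then 1
  else (1 / (‖z‖ * (1 - ‖z‖) ^ (b - β))) * Real.sin (1 / (1 - ‖z‖) ^ b)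

end

/-! `B(z̃, ζ)` is the inclusion–exclusion combination `R(ζ) - R(ζ') - R(ζ'') + R(z̃)` of four
rectangles anchored at the corner `z` of `B(z)`, where `R(w) = B(z, w)` and `ζ', ζ''` are the
mixed corners with the modulus of one of `z̃, ζ` and the angle of the other. The rectangles
overlap only along circles and rays, which are null. Each `R(w)` is controlled by the BWMO
seminorm, so `C = 4` works. -/

open Complex
open scoped Real

lemma norm_ofReal_mul_exp_mul_I {ρ : ℝ} (hρ : 0 ≤ ρ) (φ : ℝ) :
    ‖(ρ : ℂ) * exp (φ * I)‖ = ρ := by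
  rw [norm_mul, norm_exp_ofReal_mul_I, mul_one, norm_real, Real.norm_of_nonneg hρ]

lemma toIcoMod_arg_ofReal_mul_exp_mul_I {ρ α φ : ℝ} (hρ : 0 < ρ) (hφ : φ ∈ Ico α (α + 2 * π)) :
    toIcoMod Real.two_pi_pos α (arg ((ρ : ℂ) * exp (φ * I))) = φ := by
  rw [arg_real_mul _ hρ, arg_exp_mul_I, toIcoMod_toIocMod, toIcoMod_eq_self]
  exact hφ

lemma volume_span_singleton (v : ℂ) : volume (Submodule.span ℝ {v} : Set ℂ) = 0 := by
  refine Measure.addHaar_submodule _ _ fun h => ?_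
  have := finrank_span_le_card (R := ℝ) ({v} : Set ℂ)
  rw [h, finrank_top, Complex.finrank_real_complex] at this
  simp at this

section PolarRect

variable {a b c α β γ : ℝ}

lemma polarRect_mono {a' b' α' β' : ℝ} (ha : a' ≤ a) (hb : b ≤ b') (hα : α' ≤ α) (hβ : β ≤ β') :
    polarRect a b α β ⊆ polarRect a' b' α' β' := by
  rintro w ⟨ρ, φ, h₁, h₂, h₃, h₄, rfl⟩
  exact ⟨ρ, φ, ha.trans h₁, h₂.trans hb, hα.trans h₃, h₄.trans hβ, rfl⟩

lemma isCompact_polarRect (a b α β : ℝ) : IsCompact (polarRect a b α β) := by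
  have : polarRect a b α β =
      (fun p : ℝ × ℝ => (p.1 : ℂ) * exp (p.2 * I)) '' (Icc a b ×ˢ Icc α β) := by
    ext w
    constructor
    · rintro ⟨ρ, φ, h₁, h₂, h₃, h₄, rfl⟩
      exact ⟨(ρ, φ), ⟨⟨h₁, h₂⟩, h₃, h₄⟩, rfl⟩
    · rintro ⟨⟨ρ, φ⟩, ⟨⟨h₁, h₂⟩, h₃, h₄⟩, rfl⟩
      exact ⟨ρ, φ, h₁, h₂, h₃, h₄, rfl⟩
  rw [this]
  exact (isCompact_Icc.prod isCompact_Icc).image (by fun_prop)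

lemma polarRect_union_radius (hab : a ≤ b) (hbc : b ≤ c) :
    polarRect a b α β ∪ polarRect b c α β = polarRect a c α β := by
  refine Subset.antisymm (union_subset (polarRect_mono le_rfl hbc le_rfl le_rfl)
    (polarRect_mono hab le_rfl le_rfl le_rfl)) ?_
  rintro w ⟨ρ, φ, h₁, h₂, h₃, h₄, rfl⟩
  rcases le_total ρ b with hρ | hρ
  exacts [Or.inl ⟨ρ, φ, h₁, hρ, h₃, h₄, rfl⟩, Or.inr ⟨ρ, φ, hρ, h₂, h₃, h₄, rfl⟩]

lemma polarRect_union_angle (hαβ : α ≤ β) (hβγ : β ≤ γ) :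
    polarRect a b α β ∪ polarRect a b β γ = polarRect a b α γ := by
  refine Subset.antisymm (union_subset (polarRect_mono le_rfl le_rfl le_rfl hβγ)
    (polarRect_mono le_rfl le_rfl hαβ le_rfl)) ?_
  rintro w ⟨ρ, φ, h₁, h₂, h₃, h₄, rfl⟩
  rcases le_total φ β with hφ | hφ
  exacts [Or.inl ⟨ρ, φ, h₁, h₂, h₃, hφ, rfl⟩, Or.inr ⟨ρ, φ, h₁, h₂, hφ, h₄, rfl⟩]

lemma polarRect_inter_radius_subset (ha : 0 ≤ a) :
    polarRect a b α β ∩ polarRect b c α β ⊆ Metric.sphere 0 b := by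
  rintro w ⟨⟨ρ, φ, h₁, h₂, -, -, rfl⟩, ⟨ρ', φ', h₁', -, -, -, hw⟩⟩
  have hρ := norm_ofReal_mul_exp_mul_I (ha.trans h₁) φ
  rw [hw, norm_ofReal_mul_exp_mul_I ((ha.trans (h₁.trans h₂)).trans h₁')] at hρ
  rw [mem_sphere_zero_iff_norm, norm_ofReal_mul_exp_mul_I (ha.trans h₁)]
  linarith

-- A nonzero point of the common edge has only one angle in `[α, α + 2π)`, namely `β`.
lemma polarRect_inter_angle_subset (ha : 0 ≤ a) (hγ : γ < α + 2 * π) :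
    polarRect a b α β ∩ polarRect a b β γ ⊆ Submodule.span ℝ {exp (β * I)} := by
  rintro w ⟨⟨ρ, φ, h₁, -, h₃, h₄, rfl⟩, ⟨ρ', φ', h₁', -, h₃', h₄', hw⟩⟩
  rcases (ha.trans h₁).eq_or_lt with rfl | hρ
  · simp
  have hρ' : ρ' = ρ := by
    have := norm_ofReal_mul_exp_mul_I hρ.le φ
    rwa [hw, norm_ofReal_mul_exp_mul_I (ha.trans h₁')] at this
  have hφφ' : φ = φ' := by
    have := congrArg (fun w => toIcoMod Real.two_pi_pos α (arg w)) hw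
    rwa [toIcoMod_arg_ofReal_mul_exp_mul_I hρ ⟨h₃, by linarith⟩, hρ',
      toIcoMod_arg_ofReal_mul_exp_mul_I hρ ⟨by linarith, by linarith⟩] at this
  rw [le_antisymm h₄ (hφφ' ▸ h₃'), ← real_smul]
  exact Submodule.smul_mem _ _ (Submodule.mem_span_singleton_self _)

variable {E : Type*} [NormedAddCommGroup E] [NormedSpace ℝ E] {μ : Measure ℂ} {g : ℂ → E}

lemma setIntegral_polarRect_split_radius (hμ : μ ≪ volume) (ha : 0 ≤ a) (hab : a ≤ b)
    (hbc : b ≤ c) (hg : IntegrableOn g (polarRect a c α β) μ) :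
    ∫ w in polarRect a c α β, g w ∂μ =
      (∫ w in polarRect a b α β, g w ∂μ) + ∫ w in polarRect b c α β, g w ∂μ := by
  rw [← polarRect_union_radius hab hbc] at hg ⊢
  exact setIntegral_union₀
    (hμ (measure_mono_null (polarRect_inter_radius_subset ha) (Measure.addHaar_sphere _ _ _)))
    (isCompact_polarRect _ _ _ _).measurableSet.nullMeasurableSet hg.left_of_union
    hg.right_of_union

lemma setIntegral_polarRect_split_angle (hμ : μ ≪ volume) (ha : 0 ≤ a) (hαβ : α ≤ β)
    (hβγ : β ≤ γ) (hγ : γ < α + 2 * π) (hg : IntegrableOn g (polarRect a b α γ) μ) :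
    ∫ w in polarRect a b α γ, g w ∂μ =
      (∫ w in polarRect a b α β, g w ∂μ) + ∫ w in polarRect a b β γ, g w ∂μ := by
  rw [← polarRect_union_angle hαβ hβγ] at hg ⊢
  exact setIntegral_union₀
    (hμ (measure_mono_null (polarRect_inter_angle_subset ha hγ) (volume_span_singleton _)))
    (isCompact_polarRect _ _ _ _).measurableSet.nullMeasurableSet hg.left_of_union
    hg.right_of_union

lemma setIntegral_polarRect_eq_corners {r ρ₁ ρ₂ θ φ₁ φ₂ : ℝ} (hμ : μ ≪ volume) (hr : 0 ≤ r)
    (hrρ : r ≤ ρ₁) (hρ : ρ₁ ≤ ρ₂) (hθφ : θ ≤ φ₁) (hφ : φ₁ ≤ φ₂) (hφθ : φ₂ < θ + 2 * π)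
    (hg : IntegrableOn g (polarRect r ρ₂ θ φ₂) μ) :
    ∫ w in polarRect ρ₁ ρ₂ φ₁ φ₂, g w ∂μ =
      (∫ w in polarRect r ρ₂ θ φ₂, g w ∂μ) - (∫ w in polarRect r ρ₁ θ φ₂, g w ∂μ)
        - (∫ w in polarRect r ρ₂ θ φ₁, g w ∂μ) + ∫ w in polarRect r ρ₁ θ φ₁, g w ∂μ := by
  have hstrip := setIntegral_polarRect_split_radius hμ hr hrρ hρ
    (hg.mono_set (polarRect_mono le_rfl le_rfl hθφ le_rfl))
  have hφ₂ := setIntegral_polarRect_split_angle hμ hr hθφ hφ hφθ hg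
  have hφ₁ := setIntegral_polarRect_split_angle hμ hr hθφ hφ hφθ
    (hg.mono_set (polarRect_mono le_rfl hρ le_rfl le_rfl))
  rw [hφ₂, hφ₁, hstrip]
  abel

end PolarRect

lemma norm_sub_sub_add_le {E : Type*} [SeminormedAddCommGroup E] (a b c d : E) :
    ‖a - b - c + d‖ ≤ ‖a‖ + ‖b‖ + ‖c‖ + ‖d‖ :=
  (norm_add_le _ _).trans <| add_le_add_left ((norm_sub_le _ _).trans <|
    add_le_add_left (norm_sub_le _ _) _) _

lemma dA_absolutelyContinuous : dA ≪ volume := Measure.smul_absolutelyContinuous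

instance : IsFiniteMeasureOnCompacts dA :=
  .smul _ (ENNReal.inv_ne_top.2 (by simp [Real.pi_pos]))

section BWMO

variable {f : ℂ → ℂ} {z ζ : ℂ}

lemma Bz_subset_unitDisc (hz : z ∈ unitDisc) : Bz z ⊆ unitDisc := by
  rintro w ⟨ρ, φ, h₁, h₂, -, -, rfl⟩
  have : ‖z‖ < 1 := hz
  show ‖(ρ : ℂ) * exp (φ * I)‖ < 1
  rw [norm_ofReal_mul_exp_mul_I ((norm_nonneg z).trans h₁)]
  linarith

lemma theta_add_pi_mul_lt (z : ℂ) : theta z + π * (1 - ‖z‖) < theta z + 2 * π := by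
  nlinarith [Real.pi_pos, norm_nonneg z]

lemma angFrom_ofReal_mul_exp_mul_I {ρ φ : ℝ} (hρ : 0 < ρ)
    (hφ : φ ∈ Icc (theta z) (theta z + π * (1 - ‖z‖))) :
    angFrom z ((ρ : ℂ) * exp (φ * I)) = φ :=
  toIcoMod_arg_ofReal_mul_exp_mul_I hρ ⟨hφ.1, hφ.2.trans_lt (theta_add_pi_mul_lt z)⟩

lemma mem_Icc_norm_and_angFrom_of_mem_Bz (hζ : ζ ∈ Bz z) :
    ‖ζ‖ ∈ Icc ‖z‖ (1 - (1 - ‖z‖) / 2) ∧ angFrom z ζ ∈ Icc (theta z) (theta z + π * (1 - ‖z‖)) := by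
  obtain ⟨ρ, φ, h₁, h₂, h₃, h₄, rfl⟩ := hζ
  rcases ((norm_nonneg z).trans h₁).eq_or_lt with hρ | hρ
  · subst hρ
    obtain rfl : z = 0 := norm_le_zero_iff.1 h₁
    norm_num [angFrom, theta, toIcoMod_apply_left, Real.pi_nonneg]
  · rw [norm_ofReal_mul_exp_mul_I hρ.le, angFrom_ofReal_mul_exp_mul_I hρ ⟨h₃, h₄⟩]
    exact ⟨⟨h₁, h₂⟩, h₃, h₄⟩

lemma bwmoNorm_nonneg (f : ℂ → ℂ) : 0 ≤ bwmoNorm f := by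
  refine Real.sSup_nonneg ?_
  rintro _ ⟨z, -, ζ, -, rfl⟩
  unfold wQuot
  positivity

/-- The rectangles `polarRect ‖z‖ ρ (theta z) φ` are the sets `B(z, ρ e^{iφ})` of the
BWMO condition (for `ρ = 0` the rectangle is the null set `{0}`). -/
lemma norm_setIntegral_polarRect_le_bwmoNorm (hf : IsBWMO f) (hz : z ∈ unitDisc) {ρ φ : ℝ}
    (hρ : ρ ∈ Icc ‖z‖ (1 - (1 - ‖z‖) / 2)) (hφ : φ ∈ Icc (theta z) (theta z + π * (1 - ‖z‖))) :
    ((dA (Bz z)).toReal)⁻¹ * ‖∫ w in polarRect ‖z‖ ρ (theta z) φ, (f w - avg f z) ∂dA‖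
      ≤ bwmoNorm f := by
  rcases ((norm_nonneg z).trans hρ.1).eq_or_lt with rfl | hρ₀
  · have hnull : dA (polarRect ‖z‖ 0 (theta z) φ) = 0 := by
      refine measure_mono_null ?_ (dA_absolutelyContinuous (measure_singleton 0))
      rintro w ⟨ρ', φ', h₁, h₂, -, -, rfl⟩
      simp [le_antisymm h₂ ((norm_nonneg z).trans h₁)]
    rw [setIntegral_measure_zero _ hnull, norm_zero, mul_zero]
    exact bwmoNorm_nonneg f
  · obtain ⟨C, hC⟩ := hf
    refine le_csSup ⟨C, ?_⟩ ⟨z, hz, _, ⟨ρ, φ, hρ.1, hρ.2, hφ.1, hφ.2, rfl⟩, ?_⟩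
    · rintro _ ⟨z', hz', ζ', hζ', rfl⟩
      exact hC z' hz' ζ' hζ'
    · rw [wQuot, Bzz, norm_ofReal_mul_exp_mul_I hρ₀.le, angFrom_ofReal_mul_exp_mul_I hρ₀ hφ]

end BWMO

/-- There is a constant `C > 0` such that for every locally integrable `f`
on `𝔻` satisfying the BWMO condition, for all `z ∈ 𝔻` and `z̃, ζ ∈ B(z)` with `z̃ ≾ ζ`,
`(1/|B(z)|) |∫_{B(z̃,ζ)} (f(ξ) - f̂(z)) dA(ξ)| ≤ C ‖f‖_BWMO`. -/
theorem bwmo_subrect_bound :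
    ∃ C > (0:ℝ), ∀ f : ℂ → ℂ, MeasureTheory.LocallyIntegrableOn f unitDisc dA → IsBWMO f →
      ∀ z ∈ unitDisc, ∀ ztil ∈ Bz z, ∀ ζ ∈ Bz z, precSim z ztil ζ →
        ((dA (Bz z)).toReal)⁻¹ * ‖∫ ξ in Bsub z ztil ζ, (f ξ - avg f z) ∂dA‖
          ≤ C * bwmoNorm f := by
  refine ⟨4, four_pos, fun f hloc hf z hz ztil hztil ζ hζ hprec => ?_⟩
  obtain ⟨hρ₁, hφ₁⟩ := mem_Icc_norm_and_angFrom_of_mem_Bz hztil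
  obtain ⟨hρ₂, hφ₂⟩ := mem_Icc_norm_and_angFrom_of_mem_Bz hζ
  have hK := isCompact_polarRect ‖z‖ (1 - (1 - ‖z‖) / 2) (theta z) (theta z + π * (1 - ‖z‖))
  have hg : IntegrableOn (fun ξ => f ξ - avg f z) (Bz z) dA :=
    (hloc.integrableOn_compact_subset (Bz_subset_unitDisc hz) hK).sub
      (integrableOn_const hK.measure_lt_top.ne)
  rw [Bsub, setIntegral_polarRect_eq_corners dA_absolutelyContinuous (norm_nonneg z) hρ₁.1
    hprec.1 hφ₁.1 hprec.2 (hφ₂.2.trans_lt (theta_add_pi_mul_lt z))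
    (hg.mono_set (polarRect_mono le_rfl hρ₂.2 le_rfl hφ₂.2))]
  have h₂₂ := norm_setIntegral_polarRect_le_bwmoNorm hf hz hρ₂ hφ₂
  have h₁₂ := norm_setIntegral_polarRect_le_bwmoNorm hf hz hρ₁ hφ₂
  have h₂₁ := norm_setIntegral_polarRect_le_bwmoNorm hf hz hρ₂ hφ₁
  have h₁₁ := norm_setIntegral_polarRect_le_bwmoNorm hf hz hρ₁ hφ₁
  refine (mul_le_mul_of_nonneg_left (norm_sub_sub_add_le _ _ _ _) (by positivity)).trans ?_
  linarith
end

section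
/- Let b ≥ β > 0 and let f : 𝔻 → ℝ be defined by f(r·e^{iθ}) = (1/(r(1−r)^{b−β}))·sin(1/(1−r)^b) for 1/2 ≤ r < 1 and f(r·e^{iθ}) = 1 for 0 ≤ r < 1/2. Then f is integrable on 𝔻 with respect to dA (i.e. f ∈ L¹(𝔻, dA)) if and only if b − β < 1; for every choice of b and β, f is locally integrable on 𝔻. -/
open MeasureTheory Set

/-! In polar coordinates, with `s = 1 - |z|` and `c = b - β`, integrability of `fEx b β` on `𝔻`
amounts to that of `s ^ (-c) * sin (s ^ (-b))` on `(0, 1/2)`. For `c < 1` this is dominated by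
`s ^ (-c)`. For `c ≥ 1` its absolute value is at least `sin² (s ^ (-b)) / s`; writing
`sin² = (1 - cos (2 ·)) / 2` and integrating the cosine term by parts shows that this has the
primitive `log s / 2 + s ^ b * sin (2 * s ^ (-b)) / (4 * b)` up to an integrable error, and that
primitive is unbounded at `0`. -/

open Filter Metric Real
open scoped Topology

noncomputable def oscPow (c b s : ℝ) : ℝ := s ^ (-c) * sin (s ^ (-b))

lemma measurable_oscPow (c b : ℝ) : Measurable (oscPow c b) := by
  unfold oscPow
  fun_prop

lemma continuousOn_oscPow (c b : ℝ) : ContinuousOn (oscPow c b) (Ioi 0) := by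
  intro s (hs : 0 < s)
  exact ((continuousAt_rpow_const s _ (.inl hs.ne')).mul (continuous_sin.continuousAt.comp
    (continuousAt_rpow_const s _ (.inl hs.ne')))).continuousWithinAt

lemma integrableOn_oscPow {b c a : ℝ} (hc : c < 1) (ha : 0 < a) :
    IntegrableOn (oscPow c b) (Ioo 0 a) := by
  refine Integrable.mono'
    ((intervalIntegral.integrableOn_Ioo_rpow_iff (s := -c) ha).2 (by linarith))
    (measurable_oscPow c b).aestronglyMeasurable ?_
  filter_upwards [ae_restrict_mem measurableSet_Ioo] with s hs
  rw [oscPow, norm_mul, norm_of_nonneg (rpow_nonneg hs.1.le _), norm_eq_abs]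
  exact mul_le_of_le_one_right (rpow_nonneg hs.1.le _) (abs_sin_le_one _)

noncomputable def oscPowPrimitive (b s : ℝ) : ℝ :=
  log s / 2 + s ^ b * sin (2 * s ^ (-b)) / (4 * b)

lemma hasDerivAt_oscPowPrimitive {b s : ℝ} (hb : b ≠ 0) (hs : 0 < s) :
    HasDerivAt (oscPowPrimitive b)
      (sin (s ^ (-b)) ^ 2 / s + s ^ (b - 1) * sin (2 * s ^ (-b)) / 4) s := by
  have hpow : HasDerivAt (· ^ b) (b * s ^ (b - 1)) s := hasDerivAt_rpow_const (.inl hs.ne')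
  have hneg : HasDerivAt (· ^ (-b)) (-b * s ^ (-b - 1)) s := hasDerivAt_rpow_const (.inl hs.ne')
  refine (((hasDerivAt_log hs.ne').div_const 2).add
    ((hpow.mul ((hneg.const_mul 2).sin)).div_const (4 * b))).congr_deriv ?_
  have hsb : 0 < s ^ b := rpow_pos_of_pos hs b
  rw [sin_sq_eq_half_sub, rpow_sub_one hs.ne', rpow_sub_one hs.ne', rpow_neg hs.le]
  field_simp
  ring

lemma tendsto_norm_oscPowPrimitive {b : ℝ} (hb : 0 < b) :
    Tendsto (fun s => ‖oscPowPrimitive b s‖) (𝓝[>] 0) atTop := by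
  refine tendsto_abs_atBot_atTop.comp (tendsto_atBot_mono' _ ?_
    (tendsto_atBot_add_const_right _ (1 / (4 * b))
      (tendsto_log_nhdsGT_zero.atBot_div_const two_pos)))
  filter_upwards [Ioo_mem_nhdsGT one_pos] with s hs
  have hsb : s ^ b * sin (2 * s ^ (-b)) ≤ 1 :=
    (mul_le_of_le_one_right (rpow_nonneg hs.1.le _) (sin_le_one _)).trans
      (rpow_le_one hs.1.le hs.2.le hb.le)
  rw [oscPowPrimitive]
  gcongr

lemma abs_deriv_oscPowPrimitive_le {b c s : ℝ} (hc : 1 ≤ c) (hs : 0 < s) (hs1 : s ≤ 1) :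
    |sin (s ^ (-b)) ^ 2 / s + s ^ (b - 1) * sin (2 * s ^ (-b)) / 4|
      ≤ |oscPow c b s| + s ^ (b - 1) := by
  have hsq : sin (s ^ (-b)) ^ 2 / s ≤ |oscPow c b s| := by
    rw [oscPow, abs_mul, abs_of_pos (rpow_pos_of_pos hs _), div_eq_mul_inv, ← rpow_neg_one,
      ← sq_abs, mul_comm]
    have : s ^ (-1 : ℝ) ≤ s ^ (-c) := rpow_le_rpow_of_exponent_ge hs hs1 (by linarith)
    gcongr
    exact pow_le_of_le_one (abs_nonneg _) (abs_sin_le_one _) two_ne_zero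
  have hosc : |s ^ (b - 1) * sin (2 * s ^ (-b)) / 4| ≤ s ^ (b - 1) := by
    rw [abs_div, abs_mul, abs_of_pos (rpow_pos_of_pos hs _),
      abs_of_pos (by norm_num : (0 : ℝ) < 4)]
    nlinarith [abs_sin_le_one (2 * s ^ (-b)), rpow_pos_of_pos hs (b - 1)]
  calc _ ≤ |sin (s ^ (-b)) ^ 2 / s| + |s ^ (b - 1) * sin (2 * s ^ (-b)) / 4| := abs_add_le _ _
    _ ≤ _ := by rw [abs_of_nonneg (by positivity)]; gcongr

lemma not_integrableOn_oscPow {b c a : ℝ} (hb : 0 < b) (hc : 1 ≤ c) (ha : 0 < a) :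
    ¬ IntegrableOn (oscPow c b) (Ioo 0 a) := by
  intro h
  have ha1 : 0 < min a 1 := lt_min ha one_pos
  have hk : Ioo 0 (min a 1) ∈ 𝓝[>] (0 : ℝ) := Ioo_mem_nhdsGT ha1
  have hG : IntegrableOn (fun s => |oscPow c b s| + s ^ (b - 1)) (Ioo 0 (min a 1)) :=
    (h.mono_set (Ioo_subset_Ioo_right (min_le_left _ _))).abs.add
      ((intervalIntegral.integrableOn_Ioo_rpow_iff ha1).2 (by linarith))
  refine not_integrableOn_of_tendsto_norm_atTop_of_deriv_isBigO_filter _ hk ?_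
    (tendsto_norm_oscPowPrimitive hb) ?_ hG
  · filter_upwards [self_mem_nhdsWithin] with s hs
    exact (hasDerivAt_oscPowPrimitive hb.ne' hs).differentiableAt
  · refine Asymptotics.IsBigO.of_bound 1 ?_
    filter_upwards [hk] with s hs
    rw [(hasDerivAt_oscPowPrimitive hb.ne' hs.1).deriv, one_mul, norm_eq_abs, norm_eq_abs,
      abs_of_nonneg (add_nonneg (abs_nonneg _) (rpow_nonneg hs.1.le _))]
    exact abs_deriv_oscPowPrimitive_le hc hs.1 (hs.2.le.trans (min_le_right _ _))

noncomputable def fExProfile (b β r : ℝ) : ℝ :=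
  if r < 1 / 2 then 1 else (1 / (r * (1 - r) ^ (b - β))) * sin (1 / (1 - r) ^ b)

lemma fEx_eq_comp_norm (b β : ℝ) : fEx b β = fun z => fExProfile b β ‖z‖ := rfl

lemma mul_fExProfile_eq_oscPow {b β r : ℝ} (hr : 1 / 2 ≤ r) (hr1 : r < 1) :
    r * fExProfile b β r = oscPow (b - β) b (1 - r) := by
  have h1r : 0 < 1 - r := by linarith
  have hpow : 0 < (1 - r) ^ (b - β) := rpow_pos_of_pos h1r _
  rw [fExProfile, if_neg (not_lt.2 hr), oscPow, rpow_neg h1r.le, rpow_neg h1r.le, one_div]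
  field_simp

lemma integrableOn_ball_fEx_iff {b β R : ℝ} (hR : 1 / 2 ≤ R) (hR1 : R ≤ 1) :
    IntegrableOn (fEx b β) (ball 0 R) ↔
      IntegrableOn (oscPow (b - β) b) (Ioo (1 - R) (1 / 2)) := by
  calc IntegrableOn (fEx b β) (ball 0 R)
      ↔ IntegrableOn (fun r => r * fExProfile b β r) (Ioo 0 R) := by
        rw [fEx_eq_comp_norm, integrableOn_fun_norm_addHaar]
        simp [Complex.finrank_real_complex]
    _ ↔ IntegrableOn (fun r => r * fExProfile b β r) (Ico (1 / 2) R) := by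
        rw [← Ioo_union_Ico_eq_Ioo one_half_pos hR, integrableOn_union, and_iff_right]
        refine (continuous_id.integrableOn_Icc.mono_set Ioo_subset_Icc_self).congr_fun
          (fun r hr => ?_) measurableSet_Ioo
        rw [fExProfile, if_pos hr.2, mul_one, id]
    _ ↔ IntegrableOn (fun r => oscPow (b - β) b (1 - r)) (Ico (1 / 2) R) :=
        integrableOn_congr_fun (fun r hr => mul_fExProfile_eq_oscPow hr.1 (hr.2.trans_le hR1))
          measurableSet_Ico
    _ ↔ IntervalIntegrable (fun r => oscPow (b - β) b (1 - r)) volume (1 / 2) R := by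
        rw [integrableOn_Ico_iff_integrableOn_Ioo, intervalIntegrable_iff_integrableOn_Ioo_of_le hR]
    _ ↔ IntervalIntegrable (oscPow (b - β) b) volume (1 - R) (1 / 2) := by
        have := IntervalIntegrable.comp_sub_left_iff (f := oscPow (b - β) b) (a := 1 - R)
          (b := 1 / 2) 1
        rwa [sub_sub_cancel, show (1 : ℝ) - 1 / 2 = 1 / 2 by norm_num,
          IntervalIntegrable.symm_iff] at this
    _ ↔ _ := intervalIntegrable_iff_integrableOn_Ioo_of_le (by linarith)

lemma integrableOn_ball_fEx_of_lt_one (b β : ℝ) {R : ℝ} (hR : R < 1) :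
    IntegrableOn (fEx b β) (ball 0 R) := by
  have hR' : 1 / 2 ≤ max R (1 / 2) := le_max_right _ _
  refine ((integrableOn_ball_fEx_iff hR' (max_le hR.le (by norm_num))).2 ?_).mono_set
    (ball_subset_ball (le_max_left _ _))
  refine ((continuousOn_oscPow _ _).mono fun s hs => ?_).integrableOn_Icc.mono_set
    Ioo_subset_Icc_self
  exact (sub_pos.2 (max_lt hR (by norm_num))).trans_le hs.1

lemma integrableOn_dA_iff {E : Type*} [NormedAddCommGroup E] {f : ℂ → E} {s : Set ℂ} :
    IntegrableOn f s dA ↔ IntegrableOn f s := by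
  rw [IntegrableOn, IntegrableOn, dA, Measure.restrict_smul]
  exact integrable_smul_measure (ENNReal.inv_ne_zero.2 ENNReal.ofReal_ne_top)
    (ENNReal.inv_ne_top.2 (ENNReal.ofReal_pos.2 pi_pos).ne')

lemma unitDisc_eq_ball : unitDisc = ball 0 1 := by
  ext z
  simp [unitDisc]

lemma locallyIntegrableOn_fEx (b β : ℝ) : LocallyIntegrableOn (fEx b β) unitDisc dA := by
  rw [unitDisc_eq_ball, locallyIntegrableOn_iff isOpen_ball.isLocallyClosed]
  intro K hK hKc
  obtain ⟨R, hR, hKR⟩ := exists_lt_subset_ball hKc.isClosed hK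
  exact integrableOn_dA_iff.2 ((integrableOn_ball_fEx_of_lt_one b β hR).mono_set hKR)

theorem example_integrability_general (b β : ℝ) (hβ : 0 < β) :
    (MeasureTheory.IntegrableOn (fEx b β) unitDisc dA ↔ b - β < 1) ∧
    MeasureTheory.LocallyIntegrableOn (fEx b β) unitDisc dA := by
  refine ⟨?_, locallyIntegrableOn_fEx b β⟩
  rw [integrableOn_dA_iff, unitDisc_eq_ball, integrableOn_ball_fEx_iff (by norm_num) le_rfl,
    sub_self]
  exact ⟨fun h => not_le.1 fun hc => not_integrableOn_oscPow (by linarith) hc one_half_pos h,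
    fun hc => integrableOn_oscPow hc one_half_pos⟩

/-- For `b ≥ β > 0`, the example symbol `f = fEx b β` is integrable on
`𝔻` with respect to `dA` if and only if `b - β < 1`; it is locally integrable on `𝔻`
for every choice of `b` and `β`. -/
theorem example_integrability (b β : ℝ) (hβ : 0 < β) (hbβ : β ≤ b) :
    (MeasureTheory.IntegrableOn (fEx b β) unitDisc dA ↔ b - β < 1) ∧
    MeasureTheory.LocallyIntegrableOn (fEx b β) unitDisc dA :=
  example_integrability_general b β hβ
end
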